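/- (Soundness of the interpretation method for PTRSs.) Let R be a PTRS over T(F,V) and suppose there is a collapsible probabilistic monotone F-algebra (𝒜, ⊐) on a nonempty set X such that l ⊐_𝒜 d for every rule l → d ∈ R. Then R is strongly almost surely terminating (i.e., the induced PARS R̂ is SAST). -/

import Mathlib

open scoped NNReal ENNReal

/-- A finite (probability) distribution on `A`: a finitely supported weight
function with total weight `1`. -/
structure FinDist (A : Type*) where
  w : A →₀ ℝ≥0
  sum_one : w.sum (fun _ p => p) = 1

/-- Multidistributions on `A`: finite multisets of weighted elements `p:a`. -/
abbrev MD (A : Type*) := Multiset (ℝ≥0 × A)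

namespace MD

/-- The total weight `|μ|` of a multidistribution. -/
def wt {A : Type*} (μ : MD A) : ℝ≥0 := (μ.map Prod.fst).sum

/-- Scalar multiplication `p·μ`. -/
def smul {A : Type*} (p : ℝ≥0) (μ : MD A) : MD A :=
  μ.map fun qa => (p * qa.1, qa.2)

/-- The expected value `E(f(μ)) = Σ_{p:a ∈ μ} p·f(a)`. -/
def exp {A : Type*} (f : A → ℝ≥0) (μ : MD A) : ℝ≥0 :=
  (μ.map fun pa => pa.1 * f pa.2).sum

end MD

namespace FinDist

/-- The multidistribution associated with a finite distribution. -/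
def toMD {A : Type*} (d : FinDist A) : MD A :=
  d.w.support.val.map fun a => (d.w a, a)

/-- The expected value `E(f(d)) = Σ_a d(a)·f(a)`. -/
def exp {A : Type*} (f : A → ℝ≥0) (d : FinDist A) : ℝ≥0 :=
  d.w.sum fun a p => p * f a

/-- Pushforward of a finite distribution along a map; this is
`overline(h(d))`, the collapse of the elementwise image of `d`. -/
noncomputable def map {A B : Type*} (h : A → B) (d : FinDist A) : FinDist B :=
  ⟨Finsupp.mapDomain h d.w, by
    rw [Finsupp.sum_mapDomain_index (fun _ => rfl) (fun _ _ _ => rfl)]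
    exact d.sum_one⟩

/-- The Dirac distribution. -/
noncomputable def dirac {A : Type*} (a : A) : FinDist A :=
  ⟨Finsupp.single a 1, by simp⟩

end FinDist

/-- A PARS over `A`: a set of probabilistic reductions `a → d`. -/
abbrev PARS (A : Type*) := A → FinDist A → Prop

/-- `a` is terminal (a normal form) if it has no reduction. -/
def PARS.Terminal {A : Type*} (P : PARS A) (a : A) : Prop := ∀ d, ¬ P a d

/-- The probabilistic reduction relation `⇒_P` on multidistributions. -/
inductive PARS.Step {A : Type*} (P : PARS A) : MD A → MD A → Prop
  | term (a : A) : P.Terminal a → PARS.Step P {(1, a)} 0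
  | rule (a : A) (d : FinDist A) : P a d → PARS.Step P {(1, a)} d.toMD
  | conv (n : ℕ) (p : Fin n → ℝ≥0) (μ ρ : Fin n → MD A) :
      (∑ i, p i) ≤ 1 → (∀ i, PARS.Step P (μ i) (ρ i)) →
      PARS.Step P (∑ i, MD.smul (p i) (μ i)) (∑ i, MD.smul (p i) (ρ i))

/-- An (infinite) reduction sequence of `P`. -/
def PARS.RedSeq {A : Type*} (P : PARS A) (μs : ℕ → MD A) : Prop :=
  ∀ n, P.Step (μs n) (μs (n + 1))

/-- A reduction sequence of `P` starting from `μ`. -/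
def PARS.RedSeqFrom {A : Type*} (P : PARS A) (μ : MD A) (μs : ℕ → MD A) : Prop :=
  μs 0 = μ ∧ P.RedSeq μs

/-- The expected derivation length `adl(⃗μ) = Σ_{n ≥ 1} |μ_n|`. -/
noncomputable def adl {A : Type*} (μs : ℕ → MD A) : ℝ≥0∞ :=
  ∑' n : ℕ, (MD.wt (μs (n + 1)) : ℝ≥0∞)

/-- The expected derivation height `adh_P(a)`. -/
noncomputable def adh {A : Type*} (P : PARS A) (a : A) : ℝ≥0∞ :=
  ⨆ (μs : ℕ → MD A) (_ : P.RedSeqFrom {(1, a)} μs), adl μs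

/-- Strong almost sure termination. -/
def PARS.SAST {A : Type*} (P : PARS A) : Prop := ∀ a, adh P a < ⊤

/-- Almost sure termination. -/
def PARS.AST {A : Type*} (P : PARS A) : Prop :=
  ∀ μs : ℕ → MD A, P.RedSeq μs →
    Filter.Tendsto (fun n => MD.wt (μs n)) Filter.atTop (nhds 0)

/-- `f` is a (probabilistic) ranking function for `P` with parameter `ε`. -/
def PARS.Ranking {A : Type*} (P : PARS A) (ε : ℝ≥0) (f : A → ℝ≥0) : Prop :=
  ∀ a d, P a d → f a ≥ ε + FinDist.exp f d
/-- First-order terms over signature `F` (with arities `ar`) and variables `V`. -/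
inductive Tm (F : Type*) (ar : F → ℕ) (V : Type*) : Type _ where
  | var : V → Tm F ar V
  | app : (f : F) → (Fin (ar f) → Tm F ar V) → Tm F ar V

namespace Tm

/-- Homomorphic extension of a substitution to terms. -/
def subst {F V : Type*} {ar : F → ℕ} (σ : V → Tm F ar V) : Tm F ar V → Tm F ar V
  | .var x => σ x
  | .app f ts => .app f (fun i => subst σ (ts i))

end Tm

/-- A (pre)context: a term with variables `V ⊕ Unit`, where `Sum.inr ()` is the hole `□`. -/
abbrev Ctx (F : Type*) (ar : F → ℕ) (V : Type*) := Tm F ar (V ⊕ Unit)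

/-- Number of occurrences of the hole `□` in a precontext. -/
def Ctx.holes {F V : Type*} {ar : F → ℕ} : Ctx F ar V → ℕ
  | .var (.inl _) => 0
  | .var (.inr _) => 1
  | .app _ ts => ∑ i, Ctx.holes (ts i)

/-- A context has exactly one occurrence of the hole. -/
def Ctx.IsCtx {F V : Type*} {ar : F → ℕ} (C : Ctx F ar V) : Prop := C.holes = 1

/-- `C[t]`: plugging a term into (the holes of) a precontext. -/
def Ctx.plug {F V : Type*} {ar : F → ℕ} (C : Ctx F ar V) (t : Tm F ar V) : Tm F ar V :=
  match C with
  | .var (.inl x) => .var x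
  | .var (.inr _) => t
  | .app f ts => .app f (fun i => Ctx.plug (ts i) t)

/-- An `F`-algebra on carrier `X`. -/
structure Alg (F : Type*) (ar : F → ℕ) (X : Type*) where
  I : (f : F) → (Fin (ar f) → X) → X

/-- The interpretation `⟦t⟧_α` of a term under assignment `α`. -/
def Alg.interp {F V X : Type*} {ar : F → ℕ} (A : Alg F ar X) (α : V → X) :
    Tm F ar V → X
  | .var x => α x
  | .app f ts => A.I f (fun i => A.interp α (ts i))

/-- The term algebra `𝒯` on `T(F,V)`. -/
def termAlg (F : Type*) (ar : F → ℕ) (V : Type*) : Alg F ar (Tm F ar V) :=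
  ⟨fun f ts => Tm.app f ts⟩

/-- `(𝒜, ⊐)` is a probabilistic monotone `F`-algebra: each interpretation is
monotone with respect to `⊐` in each argument position. -/
def Alg.ProbMonotone {F X : Type*} {ar : F → ℕ} (A : Alg F ar X)
    (SQ : X → FinDist X → Prop) : Prop :=
  ∀ (f : F) (i : Fin (ar f)) (g : Fin (ar f) → X) (x : X) (d : FinDist X),
    SQ x d →
      SQ (A.I f (Function.update g i x))
         (d.map fun y => A.I f (Function.update g i y))

/-- Collapsibility of a relation `⊐` between elements and finite distributions. -/
def Collapsible {X : Type*} (SQ : X → FinDist X → Prop) : Prop :=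
  ∃ (G : X → ℝ≥0) (ε : ℝ≥0), 0 < ε ∧
    ∀ x d, SQ x d → G x ≥ ε + FinDist.exp G d

/-- `s ⊐_𝒜 d`: for every assignment `α`, `⟦s⟧_α ⊐ overline(⟦d⟧_α)`. -/
def Alg.Orient {F V X : Type*} {ar : F → ℕ} (A : Alg F ar X)
    (SQ : X → FinDist X → Prop) (s : Tm F ar V) (d : FinDist (Tm F ar V)) : Prop :=
  ∀ α : V → X, SQ (A.interp α s) (d.map (A.interp α))

/-- A probabilistic term rewrite system: a set of rules `l → d`. -/
abbrev PTRS (F : Type*) (ar : F → ℕ) (V : Type*) :=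
  Tm F ar V → FinDist (Tm F ar V) → Prop

/-- The PARS `R̂` induced by a PTRS `R`: closure of the rules under
contexts and substitutions. -/
def PTRS.hat {F V : Type*} {ar : F → ℕ} (R : PTRS F ar V) : PARS (Tm F ar V) :=
  fun s e =>
    ∃ (l : Tm F ar V) (d : FinDist (Tm F ar V)) (C : Ctx F ar V) (σ : V → Tm F ar V),
      R l d ∧ C.IsCtx ∧ s = C.plug (l.subst σ) ∧
      e = d.map (fun t => C.plug (t.subst σ))

/-- A PTRS is SAST if its induced PARS is. -/
def PTRS.SAST {F V : Type*} {ar : F → ℕ} (R : PTRS F ar V) : Prop :=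
  R.hat.SAST

section Aux

variable {A : Type*}

theorem FinDist.ext' {d e : FinDist A} (h : d.w = e.w) : d = e := by
  cases d; cases e; simpa using h

theorem MD.exp_zero (f : A → ℝ≥0) : MD.exp f (0 : MD A) = 0 := by simp [MD.exp]

theorem MD.exp_add (f : A → ℝ≥0) (μ ρ : MD A) :
    MD.exp f (μ + ρ) = MD.exp f μ + MD.exp f ρ := by simp [MD.exp]

theorem MD.exp_smul (f : A → ℝ≥0) (p : ℝ≥0) (μ : MD A) :
    MD.exp f (MD.smul p μ) = p * MD.exp f μ := by
  unfold MD.exp MD.smul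
  rw [Multiset.map_map, ← Multiset.sum_map_mul_left]
  congr 1
  apply Multiset.map_congr rfl
  intro x _
  simp [mul_assoc]

theorem MD.exp_singleton (f : A → ℝ≥0) (a : A) :
    MD.exp f ({(1, a)} : MD A) = f a := by simp [MD.exp]

theorem MD.wt_eq_exp (μ : MD A) : MD.wt μ = MD.exp (fun _ => 1) μ := by
  simp [MD.wt, MD.exp]

theorem MD.exp_sum {ι : Type*} (s : Finset ι) (ν : ι → MD A) (f : A → ℝ≥0) :
    MD.exp f (∑ i ∈ s, ν i) = ∑ i ∈ s, MD.exp f (ν i) := by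
  classical
  induction s using Finset.induction with
  | empty => simp [MD.exp]
  | insert _ _ h ih => simp [Finset.sum_insert h, MD.exp_add, ih]

theorem FinDist.exp_toMD (f : A → ℝ≥0) (d : FinDist A) :
    MD.exp f d.toMD = FinDist.exp f d := by
  show ((d.w.support.val.map fun a => (d.w a, a)).map fun pa => pa.1 * f pa.2).sum = _
  rw [Multiset.map_map]
  rfl

theorem FinDist.wt_toMD (d : FinDist A) : MD.wt d.toMD = 1 := by
  rw [MD.wt_eq_exp, FinDist.exp_toMD]
  simpa [FinDist.exp] using d.sum_one

theorem FinDist.exp_map {B : Type*} (g : B → ℝ≥0) (h : A → B) (d : FinDist A) :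
    FinDist.exp g (d.map h) = FinDist.exp (fun a => g (h a)) d := by
  unfold FinDist.exp FinDist.map
  exact Finsupp.sum_mapDomain_index (by simp) (by intros; rw [add_mul])

theorem FinDist.map_map {B C : Type*} (g : B → C) (h : A → B) (d : FinDist A) :
    (d.map h).map g = d.map (fun a => g (h a)) := by
  apply FinDist.ext'
  exact Finsupp.mapDomain_comp.symm

theorem FinDist.map_id' (d : FinDist A) : d.map (fun a => a) = d := by
  apply FinDist.ext'
  exact Finsupp.mapDomain_id

/-- Key bound: one probabilistic reduction step decreases expected rank by
`ε` times the weight of the target. -/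
theorem step_bound {P : PARS A} {ε : ℝ≥0} {f : A → ℝ≥0} (hf : P.Ranking ε f)
    {μ ρ : MD A} (h : P.Step μ ρ) :
    ε * MD.wt ρ + MD.exp f ρ ≤ MD.exp f μ := by
  induction h with
  | term a ha => simp [MD.wt, MD.exp]
  | rule a d had =>
      rw [FinDist.wt_toMD, FinDist.exp_toMD, MD.exp_singleton, mul_one]
      exact hf a d had
  | conv n p μ ρ hp hstep ih =>
      simp only [MD.wt_eq_exp, MD.exp_sum, MD.exp_smul, Finset.mul_sum,
        ← Finset.sum_add_distrib]
      apply Finset.sum_le_sum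
      intro i _
      calc ε * (p i * MD.exp (fun _ => 1) (ρ i)) + p i * MD.exp f (ρ i)
          = p i * (ε * MD.wt (ρ i) + MD.exp f (ρ i)) := by
            rw [MD.wt_eq_exp]; ring
        _ ≤ p i * MD.exp f (μ i) := mul_le_mul_right (ih i) _

theorem ranking_adh {P : PARS A} {ε : ℝ≥0} {f : A → ℝ≥0} (hε : 0 < ε)
    (hf : P.Ranking ε f) (a : A) : adh P a ≤ ((f a / ε : ℝ≥0) : ℝ≥0∞) := by
  apply iSup₂_le
  rintro μs ⟨h0, hred⟩
  have key : ∀ N, ε * ∑ n ∈ Finset.range N, MD.wt (μs (n + 1)) + MD.exp f (μs N)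
      ≤ MD.exp f (μs 0) := by
    intro N
    induction N with
    | zero => simp
    | succ N ih =>
        rw [Finset.sum_range_succ, mul_add]
        calc ε * ∑ n ∈ Finset.range N, MD.wt (μs (n + 1))
              + ε * MD.wt (μs (N + 1)) + MD.exp f (μs (N + 1))
            = ε * ∑ n ∈ Finset.range N, MD.wt (μs (n + 1))
              + (ε * MD.wt (μs (N + 1)) + MD.exp f (μs (N + 1))) := by ring
          _ ≤ ε * ∑ n ∈ Finset.range N, MD.wt (μs (n + 1)) + MD.exp f (μs N) :=
              add_le_add_right (step_bound hf (hred N)) _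
          _ ≤ MD.exp f (μs 0) := ih
  have hpart : ∀ N, (∑ n ∈ Finset.range N, MD.wt (μs (n + 1))) ≤ f a / ε := by
    intro N
    rw [le_div_iff₀ hε]
    calc (∑ n ∈ Finset.range N, MD.wt (μs (n + 1))) * ε
        = ε * ∑ n ∈ Finset.range N, MD.wt (μs (n + 1)) := mul_comm _ _
      _ ≤ ε * ∑ n ∈ Finset.range N, MD.wt (μs (n + 1)) + MD.exp f (μs N) :=
          le_add_right le_rfl
      _ ≤ MD.exp f (μs 0) := key N
      _ = f a := by rw [h0, MD.exp_singleton]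
  rw [adl, ENNReal.tsum_eq_iSup_sum]
  apply iSup_le
  intro s
  obtain ⟨N, hN⟩ := s.exists_nat_subset_range
  calc ∑ n ∈ s, (MD.wt (μs (n + 1)) : ℝ≥0∞)
      ≤ ∑ n ∈ Finset.range N, (MD.wt (μs (n + 1)) : ℝ≥0∞) :=
        Finset.sum_le_sum_of_subset hN
    _ = ((∑ n ∈ Finset.range N, MD.wt (μs (n + 1)) : ℝ≥0) : ℝ≥0∞) := by
        push_cast; rfl
    _ ≤ ((f a / ε : ℝ≥0) : ℝ≥0∞) := by exact_mod_cast hpart N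

section Term

variable {F V X : Type*} {ar : F → ℕ}

theorem interp_subst (A : Alg F ar X) (α : V → X) (σ : V → Tm F ar V)
    (t : Tm F ar V) :
    A.interp α (t.subst σ) = A.interp (fun x => A.interp α (σ x)) t := by
  induction t with
  | var x => rfl
  | app f ts ih =>
      show A.I f _ = A.I f _
      congr 1
      funext i
      exact ih i

theorem interp_plug (A : Alg F ar X) (α : V → X) (C : Ctx F ar V)
    (t : Tm F ar V) :
    A.interp α (C.plug t) =
      A.interp (Sum.elim α (fun _ => A.interp α t)) C := by
  induction C with
  | var x => cases x <;> rfl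
  | app f ts ih =>
      show A.I f _ = A.I f _
      congr 1
      funext i
      exact ih i

theorem interp_const (A : Alg F ar X) (α : V → X) {C : Ctx F ar V}
    (h : C.holes = 0) (x y : X) :
    A.interp (Sum.elim α fun _ => x) C = A.interp (Sum.elim α fun _ => y) C := by
  induction C with
  | var v =>
      cases v with
      | inl => rfl
      | inr => simp [Ctx.holes] at h
  | app f ts ih =>
      show A.I f _ = A.I f _
      congr 1
      funext i
      exact ih i (by
        rw [Ctx.holes] at h
        exact (Finset.sum_eq_zero_iff.mp h) i (Finset.mem_univ i))

theorem holes_one {n : ℕ} (g : Fin n → ℕ) (h : ∑ i, g i = 1) :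
    ∃ i, g i = 1 ∧ ∀ j, j ≠ i → g j = 0 := by
  classical
  have hne : ∃ i, g i ≠ 0 := by
    by_contra hc
    push_neg at hc
    simp [hc] at h
  obtain ⟨i, hi⟩ := hne
  have hsplit : g i + ∑ j ∈ Finset.univ.erase i, g j = 1 := by
    rw [Finset.add_sum_erase _ g (Finset.mem_univ i)]; exact h
  have hgi : g i = 1 := by omega
  have hzero : ∑ j ∈ Finset.univ.erase i, g j = 0 := by omega
  refine ⟨i, hgi, fun j hj => ?_⟩
  exact Finset.sum_eq_zero_iff.mp hzero j (Finset.mem_erase.mpr ⟨hj, Finset.mem_univ j⟩)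

theorem ctx_mono (A : Alg F ar X) (SQ : X → FinDist X → Prop)
    (hmono : A.ProbMonotone SQ) (C : Ctx F ar V) (hC : C.IsCtx) (α : V → X) :
    ∀ x d, SQ x d →
      SQ (A.interp (Sum.elim α fun _ => x) C)
        (d.map fun y => A.interp (Sum.elim α fun _ => y) C) := by
  induction C with
  | var v =>
      cases v with
      | inl => simp [Ctx.IsCtx, Ctx.holes] at hC
      | inr =>
          intro x d h
          simpa [Alg.interp, FinDist.map_id'] using h
  | app f ts ih =>
      obtain ⟨i, hi1, hi0⟩ := holes_one (fun j => Ctx.holes (ts j)) hC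
      intro x d h
      have hS := hmono f i (fun j => A.interp (Sum.elim α fun _ => x) (ts j)) _ _
        (ih i hi1 x d h)
      rw [FinDist.map_map] at hS
      have hL : A.I f (Function.update (fun j => A.interp (Sum.elim α fun _ => x) (ts j))
          i (A.interp (Sum.elim α fun _ => x) (ts i)))
          = A.interp (Sum.elim α fun _ => x) (Tm.app f ts) := by
        rw [Function.update_eq_self]; rfl
      have hRfun : (fun y => A.I f (Function.update
            (fun j => A.interp (Sum.elim α fun _ => x) (ts j)) i
            (A.interp (Sum.elim α fun _ => y) (ts i))))
          = fun y => A.interp (Sum.elim α fun _ => y) (Tm.app f ts) := by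
        funext y
        show A.I f _ = A.I f _
        congr 1
        funext j
        by_cases hji : j = i
        · subst hji; simp
        · rw [Function.update_of_ne hji]
          exact interp_const A α (hi0 j hji) x y
      rw [hL, hRfun] at hS
      exact hS

end Term

end Aux

/-- soundness of the interpretation method: a collapsible
probabilistic monotone `F`-algebra orienting all rules of a PTRS `R`
proves that `R` is SAST. -/
theorem stmt_12 {F V X : Type*} [Countable V] [Infinite V] [Nonempty X]
    {ar : F → ℕ} (A : Alg F ar X) (SQ : X → FinDist X → Prop)
    (hmono : A.ProbMonotone SQ) (hcol : Collapsible SQ)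
    (R : PTRS F ar V) (hR : ∀ l d, R l d → A.Orient SQ l d) :
    R.SAST := by
  obtain ⟨G, ε, hε, hG⟩ := hcol
  set α₀ : V → X := fun _ => Classical.arbitrary X with hα₀
  set f : Tm F ar V → ℝ≥0 := fun t => G (A.interp α₀ t) with hfdef
  have hrank : R.hat.Ranking ε f := by
    rintro s e ⟨l, d, C, σ, hld, hC, hs, he⟩
    set β : V → X := fun v => A.interp α₀ (σ v) with hβ
    have h1 : SQ (A.interp β l) (d.map (A.interp β)) := hR l d hld β
    have h2 := ctx_mono A SQ hmono C hC α₀ _ _ h1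
    rw [FinDist.map_map] at h2
    have hfun : (fun a => A.interp (Sum.elim α₀ fun _ => A.interp β a) C)
        = fun t => A.interp α₀ (C.plug (t.subst σ)) := by
      funext t
      rw [interp_plug, interp_subst]
    rw [hfun] at h2
    have hL : A.interp (Sum.elim α₀ fun _ => A.interp β l) C = A.interp α₀ s := by
      rw [hs, interp_plug, interp_subst]
    rw [hL] at h2
    have := hG _ _ h2
    calc f s = G (A.interp α₀ s) := rfl
      _ ≥ ε + FinDist.exp G (d.map fun t => A.interp α₀ (C.plug (t.subst σ))) := this
      _ = ε + FinDist.exp f e := by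
          rw [he, FinDist.exp_map, FinDist.exp_map]
  intro a
  exact lt_of_le_of_lt (ranking_adh hε hrank a) ENNReal.coe_lt_top
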